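/- Let c ∈ (0,1/2]. A sequence ((s_n, d_n))_{n≥1} ∈ 𝒜_c^ℕ is c-Lüroth admissible if and only if there exists a point (ω,x) ∈ {0,1}^ℕ × [c,1] such that s_n(ω,x) = s_n and d_n(ω,x) = d_n for all n ≥ 1. -/

import Mathlib

open MeasureTheory Filter Set
open scoped Classical ENNReal

noncomputable section

/-- The Lüroth map `T_L`. -/
def TL (x : ℝ) : ℝ :=
  if x = 0 then 0
  else if x = 1 then 1
  else (⌈1/x⌉ : ℝ) * ((⌈1/x⌉ : ℝ) - 1) * x - ((⌈1/x⌉ : ℝ) - 1)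

/-- The alternating Lüroth map `T_A`. -/
def TA (x : ℝ) : ℝ := 1 - TL x

/-- `z_n⁺ = z_n + c·z_n·z_{n-1}`. -/
def zp (c : ℝ) (n : ℕ) : ℝ := 1/(n:ℝ) + c * (1/(n:ℝ)) * (1/((n:ℝ) - 1))

/-- `z_n⁻ = z_n − c·z_n·z_{n+1}`. -/
def zm (c : ℝ) (n : ℕ) : ℝ := 1/(n:ℝ) - c * (1/(n:ℝ)) * (1/((n:ℝ) + 1))

/-- The maps `T_{0,c}` (`j = false`) and `T_{1,c}` (`j = true`); for `c = 0` the points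
`0` and `z_n`, `n ≥ 2`, are additionally sent to `1`. -/
def Tc (j : Bool) (c : ℝ) (x : ℝ) : ℝ :=
  if c = 0 ∧ (x = 0 ∨ ∃ n : ℕ, 2 ≤ n ∧ x = 1/(n:ℝ)) then 1
  else if x = 1 then 1
  else if (j = false ∧ ∃ n : ℕ, 2 ≤ n ∧ 1/(n:ℝ) ≤ x ∧ x < zp c n) ∨
          (j = true ∧ ∃ n : ℕ, 2 ≤ n ∧ 1/(n:ℝ) ≤ x ∧ x ≤ zm c (n-1)) then TA x
  else TL x

/-- Random iteration: `Tom c ω n = T_{ω_n,c} ∘ ⋯ ∘ T_{ω_1,c}` (paths 0-indexed). -/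
def Tom (c : ℝ) (ω : ℕ → Bool) : ℕ → ℝ → ℝ
  | 0 => fun x => x
  | n+1 => fun x => Tc (ω n) c (Tom c ω n x)

/-- The digit `d_{n+1}(ω,x)` (0-indexed: `dig c ω x n` is the digit determined by `T_ω^n x`). -/
def dig (c : ℝ) (ω : ℕ → Bool) (x : ℝ) (n : ℕ) : ℕ :=
  if Tom c ω n x = 1 then 2 else (⌈1/(Tom c ω n x)⌉).toNat

/-- The switch region `S = [c,1] ∩ ⋃_{n≥2} [z_n⁺, z_{n-1}⁻]`. -/
def SwitchS (c : ℝ) : Set ℝ :=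
  {y | y ∈ Set.Icc c 1 ∧ ∃ n : ℕ, 2 ≤ n ∧ zp c n ≤ y ∧ y ≤ zm c (n-1)}

/-- The sign `s_{n+1}(ω,x)` (0-indexed: `sgn c ω x n` is the sign determined by `T_ω^n x`). -/
def sgn (c : ℝ) (ω : ℕ → Bool) (x : ℝ) (n : ℕ) : ℕ :=
  if c = 0 then (if ω n then 1 else 0)
  else if (ω n = false ∧ Tom c ω n x ∈ SwitchS c) ∨
          (∃ d : ℕ, 1 ≤ d ∧ zm c d < Tom c ω n x ∧ Tom c ω n x < 1/(d:ℝ)) ∨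
          Tom c ω n x = 1 then 0
  else 1

/-- The c-Lüroth expansion: `expansion c ω x n = (s_{n+1}(ω,x), d_{n+1}(ω,x))`. -/
def expansion (c : ℝ) (ω : ℕ → Bool) (x : ℝ) (n : ℕ) : ℕ × ℕ :=
  (sgn c ω x n, dig c ω x n)

/-- A sequence is ultimately periodic if some tail is periodic. -/
def UltimatelyPeriodic {α : Type*} (a : ℕ → α) : Prop :=
  ∃ N r : ℕ, 1 ≤ r ∧ ∀ n, N ≤ n → a (n + r) = a n

/-- The `n`-th convergent `p_n/q_n(ω,x)`. -/
def conv (c : ℝ) (ω : ℕ → Bool) (x : ℝ) (n : ℕ) : ℝ :=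
  ∑ k ∈ Finset.range n,
    (-1 : ℝ) ^ (∑ i ∈ Finset.range k, sgn c ω x i) *
      ((dig c ω x k : ℝ) - 1 + (sgn c ω x k : ℝ)) /
      (∏ i ∈ Finset.range (k+1), ((dig c ω x i : ℝ) * ((dig c ω x i : ℝ) - 1)))

/-- The value `Σ_{n≥1} (−1)^{s_1+⋯+s_{n−1}} (d_n − 1 + s_n)/∏_{i≤n} d_i(d_i−1)` of a
sign-digit sequence (0-indexed). -/
def lurothSum (a : ℕ → ℕ × ℕ) : ℝ :=
  ∑' n : ℕ,
    (-1 : ℝ) ^ (∑ i ∈ Finset.range n, (a i).1) *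
      (((a n).2 : ℝ) - 1 + ((a n).1 : ℝ)) /
      (∏ i ∈ Finset.range (n+1), (((a i).2 : ℝ) * (((a i).2 : ℝ) - 1)))

/-- The Bernoulli `(p, 1-p)` product measure on `{0,1}^ℕ` (coordinate `0 ↔ false` has
probability `p`). -/
def IsBernoulli (p : ℝ) (m : Measure (ℕ → Bool)) : Prop :=
  IsProbabilityMeasure m ∧
  ∀ (n : ℕ) (f : Fin n → Bool),
    m {ω : ℕ → Bool | ∀ i : Fin n, ω i = f i} =
      ∏ i : Fin n, ENNReal.ofReal (if f i then 1 - p else p)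

/-- The random 0-Lüroth transformation `L_0`. -/
def L0 (q : (ℕ → Bool) × ℝ) : (ℕ → Bool) × ℝ := (fun n => q.1 (n+1), Tc (q.1 0) 0 q.2)

/-- The `n`-th approximation coefficient `θ_n(ω,x)` (1-indexed `n`). -/
def theta (ω : ℕ → Bool) (x : ℝ) (n : ℕ) : ℝ :=
  ((dig 0 ω x (n-1) : ℝ) - (sgn 0 ω x (n-1) : ℝ)) *
    (∏ i ∈ Finset.range (n-1), ((dig 0 ω x i : ℝ) * ((dig 0 ω x i : ℝ) - 1))) *
    |x - conv 0 ω x n|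

/-- Distribution function `F_L` of the Lüroth approximation coefficients. -/
def FL (y : ℝ) : ℝ := (∑ k ∈ Finset.Icc 2 (⌊1/y⌋₊ + 1), y / (k:ℝ)) + 1/((⌊1/y⌋₊ : ℝ) + 1)

/-- Distribution function `F_A` of the alternating Lüroth approximation coefficients. -/
def FA (y : ℝ) : ℝ := (∑ k ∈ Finset.Icc 2 ⌊1/y⌋₊, y / ((k:ℝ) - 1)) + 1/(⌊1/y⌋₊ : ℝ)

/-- A sequence over the alphabet `A` is universal if every finite word over `A` occurs
in it as a consecutive block. -/
def IsUniversal (A : Set (ℕ × ℕ)) (e : ℕ → ℕ × ℕ) : Prop :=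
  ∀ (m : ℕ) (w : Fin m → ℕ × ℕ), (∀ i, w i ∈ A) →
    ∃ k : ℕ, ∀ i : Fin m, e (k + (i : ℕ)) = w i

/-- `c`-Lüroth admissible sequences. -/
def Admissible (c : ℝ) (a : ℕ → ℕ × ℕ) : Prop :=
  (∀ n, (a n).1 ≤ 1 ∧ 2 ≤ (a n).2 ∧ (a n).2 ≤ ⌈1/c⌉₊) ∧
  (∀ k : ℕ, lurothSum (fun n => a (k + n)) ∈ Set.Icc c 1) ∧
  ¬ ∃ (N d : ℕ), 2 ≤ d ∧ d < ⌈1/c⌉₊ ∧ a N = (0, d+1) ∧ ∀ n, N < n → a n = (0, 2)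

/-!
On the cylinder `[z_d, z_{d-1})` both Lüroth maps are affine, and a point `y ∈ [c,1]` with sign
`s` and digit `d` satisfies `d(d-1) y = d - 1 + s + (-1)^s T(y)` with `T(y) ∈ [c,1]`; conversely,
this relation with `T(y) ∈ [c,1]` determines `d` (away from the endpoints `z_{d-1}`), and also `s`
once `ω` is chosen equal to `s` in the switch region. The tail sums of any sign-digit sequence satisfy the same relation. Since every
branch expands by `d(d-1) ≥ 2`, two bounded orbits following the same branches coincide, so the
orbit of `x` is the sequence of tail sums of its expansion; this gives the tail condition. The
excluded tails `(0, d+1), (0, 2), (0, 2), …` are exactly those where the sign-`0` branch would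
reach the fixed point `1` from a point other than `1`, which `T_L` never does.
-/

/-- The cylinder `[z_d, z_{d-1})` of points with first Lüroth digit `d`. -/
def lurothCylinder (d : ℕ) : Set ℝ := Ico (1 / (d : ℝ)) (1 / ((d : ℝ) - 1))

section Cylinder

variable {c y : ℝ} {d : ℕ}

lemma two_le_cast (hd : 2 ≤ d) : (2 : ℝ) ≤ d := by exact_mod_cast hd

lemma cast_sub_one_pos (hd : 2 ≤ d) : (0 : ℝ) < (d : ℝ) - 1 := by linarith [two_le_cast hd]

lemma mul_cast_sub_one_pos (hd : 2 ≤ d) : (0 : ℝ) < (d : ℝ) * ((d : ℝ) - 1) :=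
  mul_pos (by linarith [cast_sub_one_pos hd]) (cast_sub_one_pos hd)

lemma two_le_mul_cast_sub_one (hd : 2 ≤ d) : (2 : ℝ) ≤ (d : ℝ) * ((d : ℝ) - 1) := by
  nlinarith [two_le_cast hd]

lemma zp_eq (hd : 2 ≤ d) : zp c d = ((d : ℝ) - 1 + c) / ((d : ℝ) * ((d : ℝ) - 1)) := by
  have := (cast_sub_one_pos hd).ne'
  have : (d : ℝ) ≠ 0 := by linarith [cast_sub_one_pos hd]
  rw [zp]
  field_simp

lemma zm_pred_eq (hd : 2 ≤ d) : zm c (d - 1) = ((d : ℝ) - c) / ((d : ℝ) * ((d : ℝ) - 1)) := by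
  have := (cast_sub_one_pos hd).ne'
  have : (d : ℝ) ≠ 0 := by linarith [cast_sub_one_pos hd]
  rw [zm, Nat.cast_pred (by omega), sub_add_cancel]
  field_simp

lemma zp_le_iff (hd : 2 ≤ d) : zp c d ≤ y ↔ (d : ℝ) - 1 + c ≤ d * (d - 1) * y := by
  rw [zp_eq hd, div_le_iff₀' (mul_cast_sub_one_pos hd)]

lemma le_zm_pred_iff (hd : 2 ≤ d) : y ≤ zm c (d - 1) ↔ d * (d - 1) * y ≤ (d : ℝ) - c := by
  rw [zm_pred_eq hd, le_div_iff₀' (mul_cast_sub_one_pos hd)]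

lemma lt_zp_iff (hd : 2 ≤ d) : y < zp c d ↔ d * (d - 1) * y < (d : ℝ) - 1 + c := by
  rw [← not_le, zp_le_iff hd, not_le]

lemma mem_lurothCylinder_iff (hd : 2 ≤ d) :
    y ∈ lurothCylinder d ↔ (d : ℝ) - 1 ≤ d * (d - 1) * y ∧ d * (d - 1) * y < d := by
  have hd1 := (cast_sub_one_pos hd).ne'
  have hd0 : (d : ℝ) ≠ 0 := by linarith [cast_sub_one_pos hd]
  rw [lurothCylinder, mem_Ico, show 1 / (d : ℝ) = (d - 1) / (d * (d - 1)) by field_simp,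
    show 1 / ((d : ℝ) - 1) = d / (d * (d - 1)) by field_simp,
    div_le_iff₀' (mul_cast_sub_one_pos hd), lt_div_iff₀' (mul_cast_sub_one_pos hd)]

lemma pos_of_mem_lurothCylinder (hd : 2 ≤ d) (hy : y ∈ lurothCylinder d) : 0 < y :=
  lt_of_lt_of_le (by have := cast_sub_one_pos hd; positivity) hy.1

lemma lt_one_of_mem_lurothCylinder (hd : 2 ≤ d) (hy : y ∈ lurothCylinder d) : y < 1 := by
  have : (1 : ℝ) ≤ d - 1 := by linarith [two_le_cast hd]
  exact hy.2.trans_le ((div_le_one (cast_sub_one_pos hd)).2 this)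

lemma natCeil_one_div_eq (hd : 2 ≤ d) (hy : y ∈ lurothCylinder d) : ⌈1 / y⌉₊ = d := by
  have hy0 := pos_of_mem_lurothCylinder hd hy
  rw [Nat.ceil_eq_iff (by omega), Nat.cast_pred (by omega),
    lt_one_div (cast_sub_one_pos hd) hy0, one_div_le hy0 (by linarith [cast_sub_one_pos hd])]
  exact ⟨hy.2, hy.1⟩

lemma eq_of_mem_lurothCylinder {n : ℕ} (hn : 2 ≤ n) (hd : 2 ≤ d)
    (hyn : y ∈ lurothCylinder n) (hyd : y ∈ lurothCylinder d) : n = d :=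
  (natCeil_one_div_eq hn hyn).symm.trans (natCeil_one_div_eq hd hyd)

lemma TL_of_mem_lurothCylinder (hd : 2 ≤ d) (hy : y ∈ lurothCylinder d) :
    TL y = d * (d - 1) * y - (d - 1) := by
  have hy0 := pos_of_mem_lurothCylinder hd hy
  have hceil : ⌈1 / y⌉ = d := by
    rw [← Int.natCast_ceil_eq_ceil (by positivity), natCeil_one_div_eq hd hy]
  rw [TL, if_neg hy0.ne', if_neg (lt_one_of_mem_lurothCylinder hd hy).ne, hceil, Int.cast_natCast]

lemma TA_of_mem_lurothCylinder (hd : 2 ≤ d) (hy : y ∈ lurothCylinder d) :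
    TA y = d - d * (d - 1) * y := by
  rw [TA, TL_of_mem_lurothCylinder hd hy]
  ring

end Cylinder

section Points

variable {c : ℝ} {n : ℕ}

lemma one_div_lt_zp (hc0 : 0 < c) (hn : 2 ≤ n) : 1 / (n : ℝ) < zp c n := by
  have := cast_sub_one_pos hn
  rw [zp]
  have : 0 < c * (1 / (n : ℝ)) * (1 / ((n : ℝ) - 1)) := by positivity
  linarith

lemma zp_le_zm_pred (hc : c ≤ 1 / 2) (hn : 2 ≤ n) : zp c n ≤ zm c (n - 1) := by
  rw [zp_eq hn, zm_pred_eq hn]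
  exact div_le_div_of_nonneg_right (by linarith) (mul_cast_sub_one_pos hn).le

lemma zm_pred_lt_one_div_pred (hc0 : 0 < c) (hn : 2 ≤ n) : zm c (n - 1) < 1 / ((n : ℝ) - 1) := by
  have := cast_sub_one_pos hn
  rw [zm, Nat.cast_pred (by omega)]
  have : 0 < c * (1 / ((n : ℝ) - 1)) * (1 / ((n : ℝ) - 1 + 1)) := by
    have : (0 : ℝ) < n - 1 + 1 := by linarith
    positivity
  linarith

end Points

/-- On the cylinder of digit `d`, `T_{j,c}` acts on `y` by the alternating map `T_A`. -/
def IsAltBranch (c : ℝ) (j : Bool) (d : ℕ) (y : ℝ) : Prop :=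
  (j = false ∧ y < zp c d) ∨ (j = true ∧ y ≤ zm c (d - 1))

def lurothDigit (y : ℝ) : ℕ := if y = 1 then 2 else ⌈1 / y⌉₊

def lurothSign (c : ℝ) (j : Bool) (y : ℝ) : ℕ :=
  if (j = false ∧ y ∈ SwitchS c) ∨ (∃ d : ℕ, 1 ≤ d ∧ zm c d < y ∧ y < 1 / (d : ℝ)) ∨ y = 1
  then 0 else 1

section OnCylinder

variable {c y : ℝ} {d : ℕ} (hc0 : 0 < c) (hc : c ≤ 1 / 2) (hd : 2 ≤ d) (hyd : y ∈ lurothCylinder d)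
include hc0 hd hyd

include hc in
lemma exists_lt_zp_iff : (∃ n : ℕ, 2 ≤ n ∧ 1 / (n : ℝ) ≤ y ∧ y < zp c n) ↔ y < zp c d := by
  refine ⟨fun ⟨n, hn, h1, h2⟩ => ?_, fun h => ⟨d, hd, hyd.1, h⟩⟩
  obtain rfl := eq_of_mem_lurothCylinder hn hd
    ⟨h1, h2.trans_le ((zp_le_zm_pred hc hn).trans (zm_pred_lt_one_div_pred hc0 hn).le)⟩ hyd
  exact h2

lemma exists_le_zm_pred_iff :
    (∃ n : ℕ, 2 ≤ n ∧ 1 / (n : ℝ) ≤ y ∧ y ≤ zm c (n - 1)) ↔ y ≤ zm c (d - 1) := by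
  refine ⟨fun ⟨n, hn, h1, h2⟩ => ?_, fun h => ⟨d, hd, hyd.1, h⟩⟩
  obtain rfl := eq_of_mem_lurothCylinder hn hd
    ⟨h1, h2.trans_lt (zm_pred_lt_one_div_pred hc0 hn)⟩ hyd
  exact h2

lemma mem_switchS_iff (hy : y ∈ Icc c 1) : y ∈ SwitchS c ↔ zp c d ≤ y ∧ y ≤ zm c (d - 1) := by
  refine ⟨fun ⟨_, n, hn, h1, h2⟩ => ?_, fun h => ⟨hy, d, hd, h⟩⟩
  obtain rfl := eq_of_mem_lurothCylinder hn hd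
    ⟨(one_div_lt_zp hc0 hn).le.trans h1, h2.trans_lt (zm_pred_lt_one_div_pred hc0 hn)⟩ hyd
  exact ⟨h1, h2⟩

include hc in
lemma exists_zm_lt_iff :
    (∃ e : ℕ, 1 ≤ e ∧ zm c e < y ∧ y < 1 / (e : ℝ)) ↔ zm c (d - 1) < y := by
  refine ⟨fun ⟨e, he, h1, h2⟩ => ?_, fun h => ⟨d - 1, by omega, h, ?_⟩⟩
  · have hn : 2 ≤ e + 1 := by omega
    have hcyl : y ∈ lurothCylinder (e + 1) := by
      refine ⟨((one_div_lt_zp hc0 hn).trans_le (zp_le_zm_pred hc hn)).le.trans h1.le, ?_⟩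
      simpa using h2
    obtain rfl := eq_of_mem_lurothCylinder hn hd hcyl hyd
    exact h1
  · rw [Nat.cast_pred (by omega)]
    exact hyd.2

include hc in
lemma Tc_of_mem_lurothCylinder (j : Bool) :
    Tc j c y = if IsAltBranch c j d y then TA y else TL y := by
  rw [Tc, if_neg (fun h => hc0.ne' h.1), if_neg (lt_one_of_mem_lurothCylinder hd hyd).ne,
    exists_lt_zp_iff hc0 hc hd hyd, exists_le_zm_pred_iff hc0 hd hyd]
  exact if_congr Iff.rfl rfl rfl

include hc in
lemma lurothSign_of_mem_lurothCylinder (hy : y ∈ Icc c 1) (j : Bool) :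
    lurothSign c j y = if IsAltBranch c j d y then 1 else 0 := by
  have hzp := zp_le_zm_pred hc hd
  have hy1 := (lt_one_of_mem_lurothCylinder hd hyd).ne
  rw [lurothSign, mem_switchS_iff hc0 hd hyd hy, exists_zm_lt_iff hc0 hc hd hyd,
    IsAltBranch]
  rcases lt_or_ge y (zp c d) with hA | hA
  · have hA' : ¬ zm c (d - 1) < y := fun h => (hA.trans_le hzp).not_gt h
    cases j <;> simp [hA, hA.le.trans hzp, hA', hy1]
  rcases le_or_gt y (zm c (d - 1)) with hB | hB
  · cases j <;> simp [hA, hB, hy1, not_lt.2 hA]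
  · cases j <;> simp [hA, hB, hy1, not_lt.2 hA, not_le.2 hB]

end OnCylinder

/-- `y'` is the image of `y` under the branch of sign `p.1` and digit `p.2`. -/
def IsLurothStep (p : ℕ × ℕ) (y y' : ℝ) : Prop :=
  (p.2 : ℝ) * ((p.2 : ℝ) - 1) * y = (p.2 : ℝ) - 1 + p.1 + (-1) ^ p.1 * y'

lemma IsLurothStep.right_unique {p : ℕ × ℕ} {y y' y'' : ℝ} (h' : IsLurothStep p y y')
    (h'' : IsLurothStep p y y'') : y' = y'' := by
  unfold IsLurothStep at h' h''
  exact mul_left_cancel₀ (pow_ne_zero _ (neg_ne_zero.2 one_ne_zero)) (by linarith)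

lemma IsLurothStep.eq_of_one {c y' : ℝ} {p : ℕ × ℕ} (hc0 : 0 < c) (hs : p.1 ≤ 1) (hd : 2 ≤ p.2)
    (hy' : y' ∈ Icc c 1) (h : IsLurothStep p 1 y') : p = (0, 2) ∧ y' = 1 := by
  obtain ⟨s, d⟩ := p
  have hd' := two_le_cast hd
  simp only [IsLurothStep, mul_one] at h hs hd hd'
  interval_cases s
  · norm_num at h
    obtain rfl : d = 2 := by exact_mod_cast (show (d : ℝ) = 2 by nlinarith [hy'.2])
    norm_num at h
    exact ⟨rfl, by linarith⟩
  · norm_num at h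
    nlinarith [hy'.1]

lemma lurothSign_le_one (c : ℝ) (j : Bool) (y : ℝ) : lurothSign c j y ≤ 1 := by
  unfold lurothSign
  split_ifs <;> norm_num

lemma Tc_one {c : ℝ} (hc0 : 0 < c) (j : Bool) : Tc j c 1 = 1 := by
  rw [Tc, if_neg (fun h => hc0.ne' h.1), if_pos rfl]

section Digit

variable {y : ℝ}

lemma mem_lurothCylinder_lurothDigit (hy0 : 0 < y) (hy1 : y < 1) :
    2 ≤ lurothDigit y ∧ y ∈ lurothCylinder (lurothDigit y) := by
  have hinv : 1 < 1 / y := by rwa [lt_one_div one_pos hy0, div_one]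
  rw [lurothDigit, if_neg hy1.ne]
  have hD : 2 ≤ ⌈1 / y⌉₊ := Nat.lt_ceil.2 (by exact_mod_cast hinv)
  refine ⟨hD, ?_, ?_⟩
  · rw [one_div_le (by linarith [two_le_cast hD]) hy0]
    exact Nat.le_ceil _
  · rw [lt_one_div hy0 (cast_sub_one_pos hD)]
    linarith [Nat.ceil_lt_add_one (one_div_pos.2 hy0).le]

lemma two_le_lurothDigit (hy0 : 0 < y) (hy1 : y ≤ 1) : 2 ≤ lurothDigit y := by
  rcases hy1.lt_or_eq with hy1 | rfl
  · exact (mem_lurothCylinder_lurothDigit hy0 hy1).1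
  · simp [lurothDigit]

lemma lurothDigit_le {c : ℝ} (hc0 : 0 < c) (hc : c ≤ 1 / 2) (hy : y ∈ Icc c 1) :
    lurothDigit y ≤ ⌈1 / c⌉₊ := by
  rw [lurothDigit]
  split_ifs
  · exact Nat.lt_ceil.2 (by rw [Nat.cast_one, lt_one_div one_pos hc0]; linarith)
  · exact Nat.ceil_mono (one_div_le_one_div_of_le hc0 hy.1)

end Digit

section Step

variable {c y : ℝ} (hc0 : 0 < c) (hc : c ≤ 1 / 2)
include hc0 hc

lemma step_of_mem_lurothCylinder {d : ℕ} (hd : 2 ≤ d) (hyd : y ∈ lurothCylinder d)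
    (hy : y ∈ Icc c 1) (j : Bool) :
    Tc j c y ∈ Icc c 1 ∧ IsLurothStep (lurothSign c j y, d) y (Tc j c y) ∧
      (lurothSign c j y = 0 → Tc j c y < 1) := by
  obtain ⟨h1, h2⟩ := (mem_lurothCylinder_iff hd).1 hyd
  rw [Tc_of_mem_lurothCylinder hc0 hc hd hyd, lurothSign_of_mem_lurothCylinder hc0 hc hd hyd hy,
    IsLurothStep]
  split_ifs with halt
  · rw [TA_of_mem_lurothCylinder hd hyd]
    have : (d : ℝ) * (d - 1) * y ≤ d - c := by
      rcases halt with ⟨-, hA⟩ | ⟨-, hB⟩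
      · linarith [(lt_zp_iff hd).1 hA]
      · exact (le_zm_pred_iff hd).1 hB
    exact ⟨⟨by linarith, by linarith⟩, by push_cast; ring, by simp⟩
  · rw [TL_of_mem_lurothCylinder hd hyd]
    have : (d : ℝ) - 1 + c ≤ d * (d - 1) * y := by
      simp only [IsAltBranch, not_or, not_and, not_lt, not_le] at halt
      cases j
      · exact (zp_le_iff hd).1 (halt.1 rfl)
      · linarith [(le_zm_pred_iff (c := c) hd).not.1 (halt.2 rfl).not_ge]
    exact ⟨⟨by linarith, by linarith⟩, by push_cast; ring, fun _ => by linarith⟩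

lemma lurothStep (hy : y ∈ Icc c 1) (j : Bool) :
    Tc j c y ∈ Icc c 1 ∧ IsLurothStep (lurothSign c j y, lurothDigit y) y (Tc j c y) ∧
      (lurothSign c j y = 0 → Tc j c y = 1 → lurothDigit y = 2) := by
  by_cases hy1 : y = 1
  · subst hy1
    refine ⟨by rw [Tc_one hc0]; exact ⟨by linarith, le_rfl⟩, ?_, fun _ _ => by simp [lurothDigit]⟩
    norm_num [IsLurothStep, Tc_one hc0, lurothDigit, lurothSign]
  obtain ⟨hD, hyD⟩ :=
    mem_lurothCylinder_lurothDigit (hc0.trans_le hy.1) (lt_of_le_of_ne hy.2 hy1)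
  obtain ⟨hmem, hstep, hlt⟩ := step_of_mem_lurothCylinder hc0 hc hD hyD hy j
  exact ⟨hmem, hstep, fun hs h1 => absurd h1 (hlt hs).ne⟩

end Step

/-- `hnd` excludes `y = z_{d-1}`, the common endpoint of the cylinders of digits `d - 1` and `d`,
which the sign-`0` branch of digit `d` sends to `1`. -/
lemma mem_lurothCylinder_of_isLurothStep {c y y' : ℝ} {p : ℕ × ℕ} (hc0 : 0 < c)
    (hs : p.1 ≤ 1) (hd : 2 ≤ p.2) (hy1 : y ≠ 1) (hy' : y' ∈ Icc c 1)
    (h : IsLurothStep p y y') (hnd : p.1 = 0 → y' = 1 → p.2 = 2) :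
    y ∈ lurothCylinder p.2 := by
  obtain ⟨s, d⟩ := p
  simp only [IsLurothStep] at h hs hd hnd ⊢
  rw [mem_lurothCylinder_iff hd]
  interval_cases s
  · norm_num at h
    refine ⟨by linarith [hy'.1], lt_of_le_of_ne (by linarith [hy'.2]) fun ht => hy1 ?_⟩
    obtain rfl := hnd rfl (by linarith)
    norm_num at ht
    linarith
  · norm_num at h
    constructor <;> linarith [hy'.1, hy'.2]

lemma lurothSign_lurothDigit_Tc_of_isLurothStep {c y y' : ℝ} {p : ℕ × ℕ} (hc0 : 0 < c)
    (hc : c ≤ 1 / 2) (hy : y ∈ Icc c 1) (hs : p.1 ≤ 1) (hd : 2 ≤ p.2) (hy' : y' ∈ Icc c 1)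
    (h : IsLurothStep p y y') (hnd : p.1 = 0 → y' = 1 → p.2 = 2) :
    (lurothSign c (decide (p.1 = 1)) y, lurothDigit y) = p ∧ Tc (decide (p.1 = 1)) c y = y' := by
  by_cases hy1 : y = 1
  · subst hy1
    obtain ⟨rfl, rfl⟩ := h.eq_of_one hc0 hs hd hy'
    simp [lurothSign, lurothDigit, Tc_one hc0]
  have hyd := mem_lurothCylinder_of_isLurothStep hc0 hs hd hy1 hy' h hnd
  have hsign : lurothSign c (decide (p.1 = 1)) y = p.1 := by
    obtain ⟨s, d⟩ := p
    simp only [IsLurothStep] at h hs hd hyd ⊢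
    rw [lurothSign_of_mem_lurothCylinder hc0 hc hd hyd hy]
    interval_cases s
    · rw [if_neg]
      rintro (⟨-, hA⟩ | ⟨hj, -⟩)
      · norm_num at h
        linarith [(lt_zp_iff hd).1 hA, hy'.1]
      · simp at hj
    · norm_num at h
      rw [if_pos]
      exact Or.inr ⟨rfl, (le_zm_pred_iff hd).2 (by linarith [hy'.1])⟩
  refine ⟨Prod.ext hsign ?_, ?_⟩
  · rw [lurothDigit, if_neg hy1, natCeil_one_div_eq hd hyd]
  · have := (step_of_mem_lurothCylinder hc0 hc hd hyd hy (decide (p.1 = 1))).2.1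
    rw [hsign] at this
    exact this.right_unique h

def lurothTerm (b : ℕ → ℕ × ℕ) (n : ℕ) : ℝ :=
  (-1 : ℝ) ^ (∑ i ∈ Finset.range n, (b i).1) * (((b n).2 : ℝ) - 1 + ((b n).1 : ℝ)) /
    (∏ i ∈ Finset.range (n + 1), (((b i).2 : ℝ) * (((b i).2 : ℝ) - 1)))

section Series

variable {b : ℕ → ℕ × ℕ} (hb1 : ∀ n, (b n).1 ≤ 1) (hb2 : ∀ n, 2 ≤ (b n).2)

include hb2 in
lemma two_pow_le_prod (n : ℕ) :
    (2 : ℝ) ^ n ≤ ∏ i ∈ Finset.range n, (((b i).2 : ℝ) * (((b i).2 : ℝ) - 1)) :=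
  calc (2 : ℝ) ^ n = ∏ _i ∈ Finset.range n, (2 : ℝ) := by simp
    _ ≤ _ := Finset.prod_le_prod (fun _ _ => zero_le_two) fun i _ => two_le_mul_cast_sub_one (hb2 i)

include hb1 hb2

lemma abs_lurothTerm_le (n : ℕ) : |lurothTerm b n| ≤ (1 / 2) ^ n := by
  set P := ∏ i ∈ Finset.range n, (((b i).2 : ℝ) * (((b i).2 : ℝ) - 1))
  have hP : (2 : ℝ) ^ n ≤ P := two_pow_le_prod hb2 n
  have hP0 : 0 < P := lt_of_lt_of_le (by positivity) hP
  have hq := two_le_mul_cast_sub_one (hb2 n)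
  have hd := two_le_cast (hb2 n)
  have hs : ((b n).1 : ℝ) ≤ 1 := by exact_mod_cast hb1 n
  have hnum : 0 ≤ ((b n).2 : ℝ) - 1 + (b n).1 := by linarith [((b n).1).cast_nonneg (α := ℝ)]
  have hd1 := (cast_sub_one_pos (hb2 n)).ne'
  rw [lurothTerm, Finset.prod_range_succ, abs_div, abs_mul, abs_pow, abs_neg, abs_one, one_pow,
    one_mul, abs_of_nonneg hnum, abs_of_pos (mul_pos hP0 (by linarith))]
  calc (((b n).2 : ℝ) - 1 + (b n).1) / (P * ((b n).2 * ((b n).2 - 1)))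
      ≤ ((b n).2 * ((b n).2 - 1)) / (P * ((b n).2 * ((b n).2 - 1))) :=
        div_le_div_of_nonneg_right (by nlinarith) (mul_pos hP0 (by linarith)).le
    _ = 1 / P := by field_simp
    _ ≤ 1 / 2 ^ n := one_div_le_one_div_of_le (by positivity) hP
    _ = (1 / 2) ^ n := by rw [one_div_pow]

lemma abs_lurothSum_le : |lurothSum b| ≤ 2 := by
  rw [← Real.norm_eq_abs]
  exact tsum_of_norm_bounded hasSum_geometric_two (abs_lurothTerm_le hb1 hb2)

lemma isLurothStep_lurothSum : IsLurothStep (b 0) (lurothSum b) (lurothSum fun n => b (n + 1)) := by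
  have hd0 : ((b 0).2 : ℝ) ≠ 0 := by linarith [two_le_cast (hb2 0)]
  have hd1 : ((b 0).2 : ℝ) - 1 ≠ 0 := (cast_sub_one_pos (hb2 0)).ne'
  have hsucc (n : ℕ) : lurothTerm b (n + 1) =
      (-1) ^ (b 0).1 / (((b 0).2 : ℝ) * (((b 0).2 : ℝ) - 1)) *
        lurothTerm (fun n => b (n + 1)) n := by
    have hP : (0 : ℝ) < ∏ i ∈ Finset.range (n + 1), (((b (i + 1)).2 : ℝ) * ((b (i + 1)).2 - 1)) :=
      lt_of_lt_of_le (by positivity) (two_pow_le_prod (fun i => hb2 (i + 1)) (n + 1))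
    rw [lurothTerm, lurothTerm, Finset.sum_range_succ', Finset.prod_range_succ', pow_add]
    field_simp
  have hsum : Summable (lurothTerm b) :=
    .of_norm_bounded summable_geometric_two (abs_lurothTerm_le hb1 hb2)
  change _ * ∑' n, lurothTerm b n = _ + _ + _ * ∑' n, lurothTerm _ n
  rw [hsum.tsum_eq_zero_add, tsum_congr hsucc, tsum_mul_left, lurothTerm, Finset.sum_range_zero,
    zero_add, Finset.prod_range_one, pow_zero, one_mul]
  field_simp

lemma isLurothStep_lurothSum_tail (k : ℕ) :
    IsLurothStep (b k) (lurothSum fun n => b (k + n)) (lurothSum fun n => b (k + 1 + n)) := by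
  have h : (fun n => b (k + 1 + n)) = fun n => b (k + (n + 1)) :=
    funext fun n => by rw [add_assoc, add_comm 1 n]
  rw [h]
  exact isLurothStep_lurothSum (b := fun n => b (k + n)) (fun n => hb1 _) (fun n => hb2 _)

end Series

lemma eq_zero_of_two_mul_abs_le {u : ℕ → ℝ} {C : ℝ} (hC : ∀ n, |u n| ≤ C)
    (h : ∀ n, 2 * |u n| ≤ |u (n + 1)|) : u 0 = 0 := by
  have hpow (n : ℕ) : 2 ^ n * |u 0| ≤ |u n| := by
    induction n with
    | zero => simp
    | succ n ih => rw [pow_succ]; linarith [h n]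
  by_contra hu
  have hpos : 0 < |u 0| := abs_pos.2 hu
  obtain ⟨n, hn⟩ := pow_unbounded_of_one_lt (C / |u 0|) one_lt_two
  linarith [(div_lt_iff₀ hpos).1 hn, hpow n, hC n]

lemma eq_of_isLurothStep {b : ℕ → ℕ × ℕ} (hb2 : ∀ n, 2 ≤ (b n).2) {y z : ℕ → ℝ} {C : ℝ}
    (hC : ∀ n, |y n - z n| ≤ C) (hy : ∀ n, IsLurothStep (b n) (y n) (y (n + 1)))
    (hz : ∀ n, IsLurothStep (b n) (z n) (z (n + 1))) : y = z := by
  have hdouble (n : ℕ) : 2 * |y n - z n| ≤ |y (n + 1) - z (n + 1)| := by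
    have hq := mul_cast_sub_one_pos (hb2 n)
    have hdiff : ((b n).2 : ℝ) * ((b n).2 - 1) * (y n - z n) =
        (-1) ^ (b n).1 * (y (n + 1) - z (n + 1)) := by
      have hyn := hy n
      have hzn := hz n
      unfold IsLurothStep at hyn hzn
      linear_combination hyn - hzn
    have habs : ((b n).2 : ℝ) * ((b n).2 - 1) * |y n - z n| = |y (n + 1) - z (n + 1)| := by
      rw [← abs_of_pos hq, ← abs_mul, hdiff, abs_mul, abs_pow, abs_neg, abs_one, one_pow, one_mul]
    nlinarith [two_le_mul_cast_sub_one (hb2 n), abs_nonneg (y n - z n)]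
  funext m
  exact sub_eq_zero.1 (eq_zero_of_two_mul_abs_le (u := fun n => y (m + n) - z (m + n))
    (fun n => hC _) fun n => hdouble (m + n))

section Expansion

variable {c x : ℝ} {ω : ℕ → Bool}

lemma expansion_eq (hc0 : c ≠ 0) (n : ℕ) :
    expansion c ω x n = (lurothSign c (ω n) (Tom c ω n x), lurothDigit (Tom c ω n x)) := by
  simp only [expansion, sgn, dig, lurothSign, lurothDigit, if_neg hc0, Int.ceil_toNat]

variable (hc0 : 0 < c) (hc : c ≤ 1 / 2)
include hc0 hc

lemma Tom_mem (hx : x ∈ Icc c 1) (n : ℕ) : Tom c ω n x ∈ Icc c 1 := by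
  induction n with
  | zero => exact hx
  | succ n ih => exact (lurothStep hc0 hc ih (ω n)).1

lemma expansion_mem_alphabet (hx : x ∈ Icc c 1) (n : ℕ) :
    (expansion c ω x n).1 ≤ 1 ∧ 2 ≤ (expansion c ω x n).2 ∧ (expansion c ω x n).2 ≤ ⌈1 / c⌉₊ := by
  have hT := Tom_mem hc0 hc (ω := ω) hx n
  rw [expansion_eq hc0.ne']
  exact ⟨lurothSign_le_one _ _ _, two_le_lurothDigit (hc0.trans_le hT.1) hT.2,
    lurothDigit_le hc0 hc hT⟩

lemma isLurothStep_expansion (hx : x ∈ Icc c 1) (n : ℕ) :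
    IsLurothStep (expansion c ω x n) (Tom c ω n x) (Tom c ω (n + 1) x) ∧
      ((expansion c ω x n).1 = 0 → Tom c ω (n + 1) x = 1 → (expansion c ω x n).2 = 2) := by
  rw [expansion_eq hc0.ne']
  exact (lurothStep hc0 hc (Tom_mem hc0 hc hx n) (ω n)).2

lemma lurothSum_expansion_tail (hx : x ∈ Icc c 1) :
    (fun k => lurothSum fun n => expansion c ω x (k + n)) = fun k => Tom c ω k x := by
  have halph := expansion_mem_alphabet hc0 hc (ω := ω) hx
  refine eq_of_isLurothStep (C := 2 + 1) (fun n => (halph n).2.1) (fun k => ?_)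
    (isLurothStep_lurothSum_tail (fun n => (halph n).1) (fun n => (halph n).2.1))
    fun n => (isLurothStep_expansion hc0 hc hx n).1
  have hS := abs_lurothSum_le (b := fun n => expansion c ω x (k + n)) (fun _ => (halph _).1)
    (fun _ => (halph _).2.1)
  have hT := Tom_mem hc0 hc (ω := ω) hx k
  have : |Tom c ω k x| ≤ 1 := abs_le.2 ⟨by linarith [hT.1], hT.2⟩
  linarith [abs_sub (lurothSum fun n => expansion c ω x (k + n)) (Tom c ω k x)]

theorem admissible_expansion (hx : x ∈ Icc c 1) : Admissible c (expansion c ω x) := by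
  have hT := Tom_mem hc0 hc (ω := ω) hx
  refine ⟨expansion_mem_alphabet hc0 hc hx,
    fun k => (congrFun (lurothSum_expansion_tail hc0 hc hx) k).symm ▸ hT k, ?_⟩
  rintro ⟨N, d, hd, -, hN, hafter⟩
  have hone : (fun n => Tom c ω (N + 1 + n) x) = fun _ => 1 := by
    refine eq_of_isLurothStep (b := fun n => expansion c ω x (N + 1 + n)) (C := 1)
      (fun _ => (expansion_mem_alphabet hc0 hc hx _).2.1) (fun n => ?_)
      (fun _ => (isLurothStep_expansion hc0 hc hx _).1) fun n => ?_
    · rw [abs_le]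
      constructor <;> linarith [(hT (N + 1 + n)).1, (hT (N + 1 + n)).2]
    · rw [hafter _ (by omega)]
      norm_num [IsLurothStep]
  have := (isLurothStep_expansion hc0 hc hx N).2 (by rw [hN]) (congrFun hone 0)
  rw [hN] at this
  omega

end Expansion

section Realization

variable {c : ℝ} {a : ℕ → ℕ × ℕ} (hc0 : 0 < c) (ha : Admissible c a)
include hc0 ha

lemma lurothSum_tail_eq_one_succ {k : ℕ} (hk : (lurothSum fun n => a (k + n)) = 1) :
    a k = (0, 2) ∧ (lurothSum fun n => a (k + 1 + n)) = 1 := by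
  obtain ⟨halph, htails, -⟩ := ha
  have h := isLurothStep_lurothSum_tail (fun n => (halph n).1) (fun n => (halph n).2.1) k
  rw [hk] at h
  exact h.eq_of_one hc0 (halph k).1 (halph k).2.1 (htails (k + 1))

lemma eq_zero_two_of_lurothSum_tail_eq_one {k : ℕ} (hk : (lurothSum fun n => a (k + n)) = 1)
    (m : ℕ) : a (k + m) = (0, 2) := by
  induction m generalizing k with
  | zero => exact (lurothSum_tail_eq_one_succ hc0 ha hk).1
  | succ m ih =>
    rw [← add_assoc, add_right_comm]
    exact ih (lurothSum_tail_eq_one_succ hc0 ha hk).2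

lemma digit_eq_two_of_lurothSum_tail_eq_one (k : ℕ) (hs : (a k).1 = 0)
    (h1 : (lurothSum fun n => a (k + 1 + n)) = 1) : (a k).2 = 2 := by
  by_contra hne
  have hall := eq_zero_two_of_lurothSum_tail_eq_one hc0 ha h1
  obtain ⟨-, h2, hle⟩ := ha.1 k
  refine ha.2.2 ⟨k, (a k).2 - 1, by omega, by omega, Prod.ext hs (by simp only; omega), ?_⟩
  intro n hn
  obtain ⟨m, rfl⟩ := Nat.exists_eq_add_of_le hn
  exact hall m

theorem exists_expansion_eq_of_admissible (hc : c ≤ 1 / 2) :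
    ∃ (ω : ℕ → Bool) (x : ℝ), x ∈ Icc c 1 ∧ ∀ n, expansion c ω x n = a n := by
  have halph := ha.1
  have htails := ha.2.1
  set S : ℕ → ℝ := fun k => lurothSum fun n => a (k + n)
  set ω : ℕ → Bool := fun n => decide ((a n).1 = 1)
  have hreal (k : ℕ) := lurothSign_lurothDigit_Tc_of_isLurothStep hc0 hc (htails k) (halph k).1
    (halph k).2.1 (htails (k + 1))
    (isLurothStep_lurothSum_tail (fun n => (halph n).1) (fun n => (halph n).2.1) k)
    (digit_eq_two_of_lurothSum_tail_eq_one hc0 ha k)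
  have hTom (k : ℕ) : Tom c ω k (S 0) = S k := by
    induction k with
    | zero => rfl
    | succ k ih => exact (congrArg (Tc (ω k) c) ih).trans (hreal k).2
  refine ⟨ω, S 0, htails 0, fun n => ?_⟩
  rw [expansion_eq hc0.ne', hTom]
  exact (hreal n).1

end Realization

theorem admissible_iff_realized_general (c : ℝ) (hc0 : 0 < c) (hc : c ≤ 1/2)
    (a : ℕ → ℕ × ℕ) :
    Admissible c a ↔
      ∃ (ω : ℕ → Bool) (x : ℝ), x ∈ Set.Icc c 1 ∧ ∀ n, expansion c ω x n = a n := by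
  refine ⟨fun ha => exists_expansion_eq_of_admissible hc0 ha hc, ?_⟩
  rintro ⟨ω, x, hx, hexp⟩
  rw [← funext hexp]
  exact admissible_expansion hc0 hc hx

/-- a sequence over the alphabet `𝒜_c` is `c`-Lüroth admissible if and
only if it is the `c`-Lüroth expansion of some point `(ω,x) ∈ {0,1}^ℕ × [c,1]`. -/
theorem admissible_iff_realized (c : ℝ) (hc0 : 0 < c) (hc : c ≤ 1/2)
    (a : ℕ → ℕ × ℕ) (ha : ∀ n, (a n).1 ≤ 1 ∧ 2 ≤ (a n).2 ∧ (a n).2 ≤ ⌈1/c⌉₊) :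
    Admissible c a ↔
      ∃ (ω : ℕ → Bool) (x : ℝ), x ∈ Set.Icc c 1 ∧ ∀ n, expansion c ω x n = a n :=
  admissible_iff_realized_general c hc0 hc a

end
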